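/- arXiv:1810.05624 — 3 statements merged into one kernel-verified Lean document; each statement's English description precedes it below -/
import Mathlib

section
/- Fix λ ∈ ℝ. Let p1,q1,r1,s1,v1 : ℝ → ℝ be functions and a,b,c : ℝ → ℝ be differentiable functions satisfying, at every x ∈ ℝ: a' = −q1 b λ + p1 c λ − v1 b + s1 c; b' = −2 p1 a λ + 2 b λ² − 2 s1 a − 2 r1 b; c' = 2 q1 a λ − 2 c λ² + 2 v1 a + 2 r1 c. Then the function x ↦ a(x)² + b(x)·c(x) is constant on ℝ. -/
/-! The system is linear in `(a, b, c)` with a coefficient matrix that is, at every `x`,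
infinitesimally orthogonal for the quadratic form `a² + bc`, so the derivative
`2 a a' + b' c + b c'` of that form along a solution cancels identically. -/

theorem sq_add_mul_eq_of_hasDerivAt {a b c a' b' c' : ℝ → ℝ}
    (ha : ∀ x, HasDerivAt a (a' x) x) (hb : ∀ x, HasDerivAt b (b' x) x)
    (hc : ∀ x, HasDerivAt c (c' x) x)
    (h : ∀ x, 2 * a x * a' x + b' x * c x + b x * c' x = 0) (x y : ℝ) :
    a x ^ 2 + b x * c x = a y ^ 2 + b y * c y := by
  have hderiv : ∀ t, HasDerivAt (fun t => a t ^ 2 + b t * c t) 0 t := fun t =>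
    (((ha t).pow 2).add ((hb t).mul (hc t))).congr_deriv (by simpa [add_assoc] using h t)
  exact is_const_of_deriv_eq_zero (fun t => (hderiv t).differentiableAt)
    (fun t => (hderiv t).deriv) x y

/-- If differentiable `a, b, c` satisfy the three scalar differential equations
`a' = −q1·b·λ + p1·c·λ − v1·b + s1·c`, `b' = −2p1·a·λ + 2b·λ² − 2s1·a − 2r1·b`,
`c' = 2q1·a·λ − 2c·λ² + 2v1·a + 2r1·c` at every `x`, then `x ↦ a(x)² + b(x)·c(x)`
is constant on `ℝ`. -/
theorem a_sq_add_bc_constant (lam : ℝ) (p1 q1 r1 s1 v1 a b c : ℝ → ℝ)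
    (ha : ∀ x : ℝ, HasDerivAt a
      (-(q1 x) * b x * lam + p1 x * c x * lam - v1 x * b x + s1 x * c x) x)
    (hb : ∀ x : ℝ, HasDerivAt b
      (-2 * p1 x * a x * lam + 2 * b x * lam ^ 2 - 2 * s1 x * a x - 2 * r1 x * b x) x)
    (hc : ∀ x : ℝ, HasDerivAt c
      (2 * q1 x * a x * lam - 2 * c x * lam ^ 2 + 2 * v1 x * a x + 2 * r1 x * c x) x) :
    ∀ x y : ℝ, a x ^ 2 + b x * c x = a y ^ 2 + b y * c y :=
  sq_add_mul_eq_of_hasDerivAt ha hb hc fun _ => by ring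
end

section
/- Fix λ ∈ ℝ. Let p1,q1,r1,s1,v1,p2,q2,r2,s2,v2 : ℝ → ℝ be functions and a,b,c,e,f,g : ℝ → ℝ be differentiable functions satisfying, at every x ∈ ℝ, the six equations: a' = −q1 b λ + p1 c λ − v1 b + s1 c; b' = −2 p1 a λ + 2 b λ² − 2 s1 a − 2 r1 b; c' = 2 q1 a λ − 2 c λ² + 2 v1 a + 2 r1 c; e' = p1 g λ + p2 c λ − q2 b λ − q1 f λ + s1 g + s2 c − v1 f − v2 b; f' = 2 b λ² + 2 f λ² − 2 p1 e λ − 2 p2 a λ − 2 r1 f − 2 r2 b − 2 s1 e − 2 s2 a; g' = −2 c λ² − 2 g λ² + 2 q1 e λ + 2 q2 a λ + 2 r1 g + 2 r2 c + 2 v1 e + 2 v2 a. Then the function x ↦ 2 a(x) e(x) + f(x) c(x) + g(x) b(x) is constant on ℝ. -/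
/-! Substituting the six equations into the product rule, the derivative of
`2 a e + f c + g b` becomes a polynomial in the unknowns whose terms cancel in pairs;
a function with vanishing derivative on `ℝ` is constant. -/

theorem is_const_of_hasDerivAt_zero {𝕜 G : Type*} [RCLike 𝕜] [NormedAddCommGroup G]
    [NormedSpace 𝕜 G] {f : 𝕜 → G} (hf : ∀ x, HasDerivAt f 0 x) (x y : 𝕜) : f x = f y :=
  is_const_of_deriv_eq_zero (fun z => (hf z).differentiableAt) (fun z => (hf z).deriv) x y

theorem HasDerivAt.two_mul_mul_add_mul_add_mul {𝕜 : Type*} [NontriviallyNormedField 𝕜]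
    {a b c e f g : 𝕜 → 𝕜} {a' b' c' e' f' g' x : 𝕜}
    (ha : HasDerivAt a a' x) (hb : HasDerivAt b b' x) (hc : HasDerivAt c c' x)
    (he : HasDerivAt e e' x) (hf : HasDerivAt f f' x) (hg : HasDerivAt g g' x) :
    HasDerivAt (fun y => 2 * a y * e y + f y * c y + g y * b y)
      (2 * (a' * e x + a x * e') + (f' * c x + f x * c') + (g' * b x + g x * b')) x := by
  have h := ((ha.const_mul 2).mul he).add ((hf.mul hc).add (hg.mul hb))
  simp only [mul_add, ← add_assoc, ← mul_assoc] at h ⊢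
  exact h

/-- If differentiable `a, b, c, e, f, g` satisfy the six scalar differential
equations of the enlarged stationary zero-curvature system at every `x`, then
`x ↦ 2·a(x)·e(x) + f(x)·c(x) + g(x)·b(x)` is constant on `ℝ`. -/
theorem two_ae_add_fc_add_gb_constant (lam : ℝ)
    (p1 q1 r1 s1 v1 p2 q2 r2 s2 v2 a b c e f g : ℝ → ℝ)
    (ha : ∀ x : ℝ, HasDerivAt a
      (-(q1 x) * b x * lam + p1 x * c x * lam - v1 x * b x + s1 x * c x) x)
    (hb : ∀ x : ℝ, HasDerivAt b
      (-2 * p1 x * a x * lam + 2 * b x * lam ^ 2 - 2 * s1 x * a x - 2 * r1 x * b x) x)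
    (hc : ∀ x : ℝ, HasDerivAt c
      (2 * q1 x * a x * lam - 2 * c x * lam ^ 2 + 2 * v1 x * a x + 2 * r1 x * c x) x)
    (he : ∀ x : ℝ, HasDerivAt e
      (p1 x * g x * lam + p2 x * c x * lam - q2 x * b x * lam - q1 x * f x * lam
        + s1 x * g x + s2 x * c x - v1 x * f x - v2 x * b x) x)
    (hf : ∀ x : ℝ, HasDerivAt f
      (2 * b x * lam ^ 2 + 2 * f x * lam ^ 2 - 2 * p1 x * e x * lam - 2 * p2 x * a x * lam
        - 2 * r1 x * f x - 2 * r2 x * b x - 2 * s1 x * e x - 2 * s2 x * a x) x)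
    (hg : ∀ x : ℝ, HasDerivAt g
      (-2 * c x * lam ^ 2 - 2 * g x * lam ^ 2 + 2 * q1 x * e x * lam + 2 * q2 x * a x * lam
        + 2 * r1 x * g x + 2 * r2 x * c x + 2 * v1 x * e x + 2 * v2 x * a x) x) :
    ∀ x y : ℝ, 2 * a x * e x + f x * c x + g x * b x
      = 2 * a y * e y + f y * c y + g y * b y := by
  have hderiv : ∀ x, HasDerivAt (fun y => 2 * a y * e y + f y * c y + g y * b y) 0 x :=
    fun x => ((ha x).two_mul_mul_add_mul_add_mul (hb x) (hc x) (he x) (hf x) (hg x)).congr_deriv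
      (by ring)
  exact is_const_of_hasDerivAt_zero hderiv
end

section
/- For all traceless 2×2 real matrices A1, A2, B1, B2, C1, C2 and all constants η1, η2 ∈ ℝ, the bilinear form defined by ⟨M(A1,A2), M(B1,B2)⟩ = (2 a1 b1 + a2 b3 + a3 b2) η1 + (2 a1 b4 + a2 b6 + a3 b5 + 2 a4 b1 + a5 b3 + a6 b2) η2 is ad-invariant with respect to the matrix commutator: ⟨⁅A, B⁆, C⟩ = ⟨A, ⁅B, C⁆⟩ for all A = M(A1,A2), B = M(B1,B2), C = M(C1,C2) of this form, where ⁅X,Y⁆ = X·Y − Y·X. (Note that the commutator of two block matrices of this form is again of this form with traceless 2×2 blocks.) -/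
open Matrix

/-- The block matrix `M(A1,A2) = [[A1,A2],[0,A1]]` for 2×2 real matrices. -/
def Mblk (A1 A2 : Matrix (Fin 2) (Fin 2) ℝ) :
    Matrix (Fin 2 ⊕ Fin 2) (Fin 2 ⊕ Fin 2) ℝ :=
  fromBlocks A1 A2 0 A1

/-- The bilinear form on block matrices `A = M(A1,A2)`, `B = M(B1,B2)` with traceless
2×2 blocks `A1 = [[a1,a2],[a3,−a1]]`, `A2 = [[a4,a5],[a6,−a4]]` (and similarly for `B`),
given by `⟨A,B⟩ = (2a1b1 + a2b3 + a3b2)η1 + (2a1b4 + a2b6 + a3b5 + 2a4b1 + a5b3 + a6b2)η2`,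
expressed via the matrix entries. -/
def dknForm (η1 η2 : ℝ) (A B : Matrix (Fin 2 ⊕ Fin 2) (Fin 2 ⊕ Fin 2) ℝ) : ℝ :=
  (2 * A (.inl 0) (.inl 0) * B (.inl 0) (.inl 0)
    + A (.inl 0) (.inl 1) * B (.inl 1) (.inl 0)
    + A (.inl 1) (.inl 0) * B (.inl 0) (.inl 1)) * η1 +
  (2 * A (.inl 0) (.inl 0) * B (.inl 0) (.inr 0)
    + A (.inl 0) (.inl 1) * B (.inl 1) (.inr 0)
    + A (.inl 1) (.inl 0) * B (.inl 0) (.inr 1)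
    + 2 * A (.inl 0) (.inr 0) * B (.inl 0) (.inl 0)
    + A (.inl 0) (.inr 1) * B (.inl 1) (.inl 0)
    + A (.inl 1) (.inr 0) * B (.inl 0) (.inl 1)) * η2

set_option maxHeartbeats 4000000 in
/-- The bilinear form `⟨·,·⟩` on block matrices with traceless 2×2 blocks is
ad-invariant with respect to the matrix commutator `⁅X,Y⁆ = X·Y − Y·X`:
`⟨⁅A,B⁆, C⟩ = ⟨A, ⁅B,C⁆⟩`. -/
theorem dknForm_ad_invariant (η1 η2 a1 a2 a3 a4 a5 a6 b1 b2 b3 b4 b5 b6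
    c1 c2 c3 c4 c5 c6 : ℝ) :
    dknForm η1 η2
        ⁅Mblk !![a1, a2; a3, -a1] !![a4, a5; a6, -a4],
          Mblk !![b1, b2; b3, -b1] !![b4, b5; b6, -b4]⁆
        (Mblk !![c1, c2; c3, -c1] !![c4, c5; c6, -c4]) =
      dknForm η1 η2
        (Mblk !![a1, a2; a3, -a1] !![a4, a5; a6, -a4])
        ⁅Mblk !![b1, b2; b3, -b1] !![b4, b5; b6, -b4],
          Mblk !![c1, c2; c3, -c1] !![c4, c5; c6, -c4]⁆ := by
  simp only [dknForm, Mblk, Ring.lie_def, Matrix.sub_apply, Matrix.mul_apply,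
    Fin.sum_univ_two, Fintype.sum_sum_type, fromBlocks_apply₁₁, fromBlocks_apply₁₂,
    fromBlocks_apply₂₁, fromBlocks_apply₂₂, Matrix.zero_apply,
    Matrix.of_apply, Matrix.cons_val', Matrix.empty_val', Matrix.cons_val_fin_one,
    Matrix.cons_val_zero, Matrix.cons_val_one, Matrix.head_cons, Matrix.head_fin_const]
  ring
end
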